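/- Let g : ℝ × ℝ → ℝ satisfy the Lipschitz condition |g(t, a) − g(t, b)| ≤ L_g·|a − b| for all t, a, b, with L_g > 0. Let τ_1, …, τ_N > 0 be time steps satisfying condition S1 and with max_k τ_k ≤ 1/(4L_g). Suppose y^0, …, y^N satisfy D_2 y^n = g(t_n, y^n) for 1 ≤ n ≤ N, and ȳ^0, …, ȳ^N satisfy the perturbed scheme D_2 ȳ^n = g(t_n, ȳ^n) + ε^n for 1 ≤ n ≤ N. Then for every 1 ≤ n ≤ N, |y^n − ȳ^n| ≤ 2·exp(4 L_g t_{n−1})·(|y^0 − ȳ^0| + 2·t_n·max_{1≤j≤n} |ε^j|) (zero-stability of the adaptive BDF2 method). -/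

import Mathlib

open Finset

/-- BDF2 convolution kernels `b^{(n)}_j` built from the step sizes `τ`. -/
noncomputable def bdf2 (τ : ℕ → ℝ) (n j : ℕ) : ℝ :=
  if n = 1 then (if j = 0 then 1 / τ 1 else 0)
  else if j = 0 then (1 + 2 * (τ n / τ (n - 1))) / (τ n * (1 + τ n / τ (n - 1)))
  else if j = 1 then -(τ n / τ (n - 1)) ^ 2 / (τ n * (1 + τ n / τ (n - 1)))
  else 0

/-- DOC kernels: `doc τ n g = θ^{(n)}_g`, defined by the recursive procedure
`θ^{(n)}_0 = 1/b^{(n)}_0`, `θ^{(n)}_{n-k} = -(1/b^{(k)}_0) ∑_{j=k+1}^n θ^{(n)}_{n-j} b^{(j)}_{j-k}`. -/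
noncomputable def doc (τ : ℕ → ℝ) (n : ℕ) : ℕ → ℝ
  | 0 => 1 / bdf2 τ n 0
  | (g + 1) =>
    -(1 / bdf2 τ (n - (g + 1)) 0) *
      ∑ i ∈ (Finset.range (g + 1)).attach,
        doc τ n i.1 * bdf2 τ (n - i.1) (g + 1 - i.1)
  decreasing_by exact Finset.mem_range.mp i.2

/-- The variable-step BDF2 formula `D_2 v^n = ∑_{k=1}^n b^{(n)}_{n-k} (v^k - v^{k-1})`. -/
noncomputable def D2 {V : Type*} [AddCommGroup V] [Module ℝ V]
    (τ : ℕ → ℝ) (v : ℕ → V) (n : ℕ) : V :=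
  ∑ k ∈ Finset.Icc 1 n, bdf2 τ n (n - k) • (v k - v (k - 1))

/-- Time levels `t_n = τ_1 + ⋯ + τ_n`. -/
noncomputable def tlv (τ : ℕ → ℝ) (n : ℕ) : ℝ := ∑ i ∈ Finset.Icc 1 n, τ i

/-!
For `v = y - ȳ` the scheme gives `|D_2 v^j| ≤ L_g |v^j| + |ε^j|`. Since `b^{(n)}_0 > 0 ≥ b^{(n)}_1`,
`b^{(n)}_j = 0` for `j ≥ 2` and `b^{(n)}_0 τ_n + b^{(n)}_1 τ_{n-1} = 1`, unrolling the two-term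
recursion `b^{(n)}_0 ∇v^n = D_2 v^n - b^{(n)}_1 ∇v^{n-1}` gives
`|∇v^n| ≤ τ_n max_{j ≤ n} |D_2 v^j|` (this is the positivity of the DOC kernels together with
`∑_j θ^{(n)}_{n-j} = τ_n`). Hence the running maximum of `|v^j|` obeys an implicit one-step
inequality, which for `L_g τ_n ≤ 1/4` yields the Grönwall bound
`exp (2 L_g t_n) (|v^0| + t_n max_j |ε^j|)`; finally `exp (2 L_g τ_n) ≤ 2`.
-/

lemma bdf2_eq_zero_of_two_le (τ : ℕ → ℝ) (n : ℕ) {j : ℕ} (hj : 2 ≤ j) : bdf2 τ n j = 0 := by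
  unfold bdf2
  split_ifs <;> first | omega | rfl

section kernel

variable {τ : ℕ → ℝ} {n : ℕ}

lemma bdf2_zero_pos (hn : 2 ≤ n) (hτn : 0 < τ n) (hτn' : 0 < τ (n - 1)) : 0 < bdf2 τ n 0 := by
  have hr : 0 < τ n / τ (n - 1) := div_pos hτn hτn'
  rw [bdf2, if_neg (by omega), if_pos rfl]
  positivity

lemma bdf2_one_nonpos (hn : 2 ≤ n) (hτn : 0 < τ n) (hτn' : 0 < τ (n - 1)) : bdf2 τ n 1 ≤ 0 := by
  have hr : 0 < τ n / τ (n - 1) := div_pos hτn hτn'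
  rw [bdf2, if_neg (by omega), if_neg one_ne_zero, if_pos rfl, neg_div]
  exact neg_nonpos.mpr (by positivity)

/-- Consistency of the scheme on the linear function `t`, i.e. `D_2 t^n = 1`. -/
lemma bdf2_zero_mul_add_bdf2_one_mul (hn : 2 ≤ n) (hτn : 0 < τ n) (hτn' : 0 < τ (n - 1)) :
    bdf2 τ n 0 * τ n + bdf2 τ n 1 * τ (n - 1) = 1 := by
  have hr : 0 < τ n / τ (n - 1) := div_pos hτn hτn'
  rw [bdf2, if_neg (by omega), if_pos rfl, bdf2, if_neg (by omega), if_neg one_ne_zero, if_pos rfl]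
  field_simp
  ring

end kernel

section D2

variable {V : Type*} [AddCommGroup V] [Module ℝ V] (τ : ℕ → ℝ) (v w : ℕ → V)

lemma D2_sub (n : ℕ) : D2 τ (v - w) n = D2 τ v n - D2 τ w n := by
  simp only [D2, ← Finset.sum_sub_distrib, Pi.sub_apply, ← smul_sub]
  congr! 2
  abel

lemma D2_one : D2 τ v 1 = (τ 1)⁻¹ • (v 1 - v 0) := by
  simp [D2, bdf2]

lemma D2_of_two_le {n : ℕ} (hn : 2 ≤ n) :
    D2 τ v n = bdf2 τ n 0 • (v n - v (n - 1)) + bdf2 τ n 1 • (v (n - 1) - v (n - 2)) := by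
  obtain ⟨m, rfl⟩ : ∃ m, n = m + 2 := ⟨n - 2, by omega⟩
  have hlow : ∑ k ∈ Icc 1 m, bdf2 τ (m + 2) (m + 2 - k) • (v k - v (k - 1)) = 0 :=
    Finset.sum_eq_zero fun k hk => by
      rw [bdf2_eq_zero_of_two_le τ _ (by simp at hk; omega), zero_smul]
  rw [D2, Finset.sum_Icc_succ_top (by omega), Finset.sum_Icc_succ_top (by omega), hlow]
  simp only [zero_add, show m + 2 - (m + 1) = 1 by omega, Nat.sub_self,
    show m + 2 - 1 = m + 1 by omega, show m + 2 - 2 = m by omega, Nat.add_sub_cancel]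
  abel

end D2

lemma norm_sub_le_mul_of_norm_D2_le {V : Type*} [NormedAddCommGroup V] [NormedSpace ℝ V]
    {τ : ℕ → ℝ} {v : ℕ → V} {M : ℝ} {n : ℕ} (hn : 1 ≤ n)
    (hτ : ∀ k, 1 ≤ k → k ≤ n → 0 < τ k) (hD : ∀ j, 1 ≤ j → j ≤ n → ‖D2 τ v j‖ ≤ M) :
    ‖v n - v (n - 1)‖ ≤ τ n * M := by
  induction n, hn using Nat.le_induction with
  | base =>
    have hτ1 := hτ 1 le_rfl le_rfl
    have h := hD 1 le_rfl le_rfl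
    rw [D2_one, norm_smul, Real.norm_of_nonneg (inv_pos.mpr hτ1).le] at h
    rwa [← inv_mul_le_iff₀ hτ1]
  | succ n hn ih =>
    have hτ' := hτ (n + 1) (by omega) le_rfl
    have hτn := hτ n hn (by omega)
    have hprev := ih (fun k hk hkn => hτ k hk (by omega)) (fun j hj hjn => hD j hj (by omega))
    have hb0 := bdf2_zero_pos (n := n + 1) (by omega) hτ' hτn
    have hb1 := bdf2_one_nonpos (n := n + 1) (by omega) hτ' hτn
    have hsum := bdf2_zero_mul_add_bdf2_one_mul (n := n + 1) (by omega) hτ' hτn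
    have hrec := D2_of_two_le τ v (n := n + 1) (by omega)
    simp only [Nat.add_sub_cancel, show n + 1 - 2 = n - 1 by omega] at hrec hsum
    have hM := hD (n + 1) (by omega) le_rfl
    have hb0_mul : bdf2 τ (n + 1) 0 * ‖v (n + 1) - v n‖ ≤ M - bdf2 τ (n + 1) 1 * (τ n * M) :=
      calc bdf2 τ (n + 1) 0 * ‖v (n + 1) - v n‖
          = ‖D2 τ v (n + 1) - bdf2 τ (n + 1) 1 • (v n - v (n - 1))‖ := by
            rw [hrec, add_sub_cancel_right, norm_smul, Real.norm_of_nonneg hb0.le]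
        _ ≤ M + -bdf2 τ (n + 1) 1 * ‖v n - v (n - 1)‖ := by
            grw [norm_sub_le, norm_smul, Real.norm_of_nonpos hb1, hM]
        _ ≤ M - bdf2 τ (n + 1) 1 * (τ n * M) := by
            linarith [mul_le_mul_of_nonneg_left hprev (neg_nonneg.mpr hb1)]
    rw [Nat.add_sub_cancel]
    refine le_of_mul_le_mul_left (hb0_mul.trans_eq ?_) hb0
    linear_combination (-M) * hsum

lemma tlv_zero (τ : ℕ → ℝ) : tlv τ 0 = 0 := by
  simp [tlv]

lemma tlv_succ (τ : ℕ → ℝ) (n : ℕ) : tlv τ (n + 1) = tlv τ n + τ (n + 1) :=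
  Finset.sum_Icc_succ_top (by omega) τ

lemma tlv_nonneg {τ : ℕ → ℝ} {n : ℕ} (hτ : ∀ k, 1 ≤ k → k ≤ n → 0 ≤ τ k) : 0 ≤ tlv τ n :=
  Finset.sum_nonneg fun k hk => hτ k (Finset.mem_Icc.mp hk).1 (Finset.mem_Icc.mp hk).2

/-- Discrete Grönwall inequality for an implicit scheme. The restriction `L τ_n ≤ 1/2` lets the
implicit part be absorbed, at the cost of the factor `1 / (1 - L τ_n) ≤ 1 + 2 L τ_n`. -/
lemma le_exp_mul_tlv_of_implicit_step {e τ : ℕ → ℝ} {L c : ℝ} {N : ℕ} (hL : 0 ≤ L) (hc : 0 ≤ c)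
    (he0 : 0 ≤ e 0) (hτ : ∀ k, 1 ≤ k → k ≤ N → 0 ≤ τ k)
    (hLτ : ∀ k, 1 ≤ k → k ≤ N → L * τ k ≤ 1 / 2)
    (he : ∀ n, 1 ≤ n → n ≤ N → ∀ M, (∀ j ≤ n, e j ≤ M) → e n ≤ e (n - 1) + τ n * (L * M + c)) :
    ∀ n ≤ N, ∀ j ≤ n, e j ≤ Real.exp (2 * L * tlv τ n) * (e 0 + c * tlv τ n) := by
  intro n
  induction n with
  | zero =>
    intro _ j hj
    simp [Nat.le_zero.mp hj, tlv_zero]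
  | succ n ih =>
    intro hnN
    set B := Real.exp (2 * L * tlv τ n) * (e 0 + c * tlv τ n)
    have htn : 0 ≤ tlv τ n := tlv_nonneg fun k hk hkn => hτ k hk (by omega)
    have hB : 0 ≤ B := by positivity
    have hprev := ih (by omega)
    have hτ' := hτ (n + 1) (by omega) hnN
    have hLτ' := hLτ (n + 1) (by omega) hnN
    set M := max B (e (n + 1))
    have hle : ∀ j ≤ n + 1, e j ≤ M := fun j hj => by
      rcases Nat.lt_or_eq_of_le hj with hj | rfl
      · exact (hprev j (by omega)).trans (le_max_left _ _)
      · exact le_max_right _ _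
    have hM : M ≤ B + τ (n + 1) * (L * M + c) := by
      have hlast := he (n + 1) (by omega) hnN M hle
      rw [Nat.add_sub_cancel] at hlast
      have hMB : 0 ≤ L * M + c := by positivity
      exact max_le (by nlinarith) (hlast.trans (by linarith [hprev n le_rfl]))
    have hM' : M ≤ (1 + 2 * L * τ (n + 1)) * (B + c * τ (n + 1)) := by
      have hM0 : 0 ≤ M := hB.trans (le_max_left _ _)
      have hx : 0 ≤ L * τ (n + 1) := mul_nonneg hL hτ'
      have habs : (1 - L * τ (n + 1)) * M ≤ B + c * τ (n + 1) := by linarith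
      nlinarith [mul_le_mul_of_nonneg_left habs (by linarith : 0 ≤ 1 + 2 * L * τ (n + 1)),
        mul_nonneg (mul_nonneg hx (by linarith : 0 ≤ 1 - 2 * (L * τ (n + 1)))) hM0]
    have hgrowth : (1 + 2 * L * τ (n + 1)) * (B + c * τ (n + 1))
        ≤ Real.exp (2 * L * tlv τ (n + 1)) * (e 0 + c * tlv τ (n + 1)) :=
      calc (1 + 2 * L * τ (n + 1)) * (B + c * τ (n + 1))
          ≤ Real.exp (2 * L * τ (n + 1)) * (B + Real.exp (2 * L * tlv τ n) * (c * τ (n + 1))) := by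
            gcongr ?_ * (B + ?_)
            · linarith [Real.add_one_le_exp (2 * L * τ (n + 1))]
            · exact le_mul_of_one_le_left (by positivity) (Real.one_le_exp (by positivity))
        _ = Real.exp (2 * L * tlv τ (n + 1)) * (e 0 + c * tlv τ (n + 1)) := by
            rw [tlv_succ, mul_add (2 * L), Real.exp_add]
            ring
    exact fun j hj => ((hle j hj).trans hM').trans hgrowth

lemma exp_two_mul_tlv_le {τ : ℕ → ℝ} {L : ℝ} {n : ℕ} (hn : 1 ≤ n) (hL : 0 ≤ L)
    (hτ : ∀ k, 1 ≤ k → k ≤ n → 0 ≤ τ k) (hLτ : L * τ n ≤ 1 / 4) :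
    Real.exp (2 * L * tlv τ n) ≤ 2 * Real.exp (4 * L * tlv τ (n - 1)) := by
  obtain ⟨m, rfl⟩ : ∃ m, n = m + 1 := ⟨n - 1, by omega⟩
  have htm : 0 ≤ tlv τ m := tlv_nonneg fun k hk hkm => hτ k hk (by omega)
  have hx : 0 ≤ 2 * L * τ (m + 1) := by have := hτ (m + 1) hn le_rfl; positivity
  have hexp : Real.exp (2 * L * τ (m + 1)) ≤ 2 :=
    (Real.exp_bound_div_one_sub_of_interval hx (by linarith)).trans
      ((div_le_iff₀ (by linarith)).mpr (by linarith))
  rw [tlv_succ, Nat.add_sub_cancel, mul_add, Real.exp_add, mul_comm (2 : ℝ) (Real.exp _)]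
  gcongr
  nlinarith

lemma abs_D2_sub_le {g : ℝ → ℝ → ℝ} {L : ℝ} (hLip : ∀ t a b : ℝ, |g t a - g t b| ≤ L * |a - b|)
    {τ y ybar ε : ℕ → ℝ} {n : ℕ} (hy : D2 τ y n = g (tlv τ n) (y n))
    (hybar : D2 τ ybar n = g (tlv τ n) (ybar n) + ε n) :
    |D2 τ (y - ybar) n| ≤ L * |y n - ybar n| + |ε n| := by
  rw [D2_sub, hy, hybar, ← sub_sub]
  exact (abs_sub _ _).trans (add_le_add_left (hLip _ _ _) _)

lemma abs_sub_le_add_of_D2_eq {g : ℝ → ℝ → ℝ} {L : ℝ} (hL : 0 ≤ L)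
    (hLip : ∀ t a b : ℝ, |g t a - g t b| ≤ L * |a - b|) {τ y ybar ε : ℕ → ℝ} {c M : ℝ} {n : ℕ}
    (hn : 1 ≤ n) (hτ : ∀ k, 1 ≤ k → k ≤ n → 0 < τ k)
    (hy : ∀ j, 1 ≤ j → j ≤ n → D2 τ y j = g (tlv τ j) (y j))
    (hybar : ∀ j, 1 ≤ j → j ≤ n → D2 τ ybar j = g (tlv τ j) (ybar j) + ε j)
    (hε : ∀ j, 1 ≤ j → j ≤ n → |ε j| ≤ c) (hM : ∀ j ≤ n, |y j - ybar j| ≤ M) :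
    |y n - ybar n| ≤ |y (n - 1) - ybar (n - 1)| + τ n * (L * M + c) := by
  have hD : ∀ j, 1 ≤ j → j ≤ n → ‖D2 τ (y - ybar) j‖ ≤ L * M + c := fun j hj hjn =>
    (abs_D2_sub_le hLip (hy j hj hjn) (hybar j hj hjn)).trans
      (add_le_add (by gcongr; exact hM j hjn) (hε j hj hjn))
  have hincr := norm_sub_le_mul_of_norm_D2_le hn hτ hD
  simp only [Pi.sub_apply, Real.norm_eq_abs] at hincr
  linarith [abs_sub_abs_le_abs_sub (y n - ybar n) (y (n - 1) - ybar (n - 1))]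

theorem bdf2_zero_stability_general
    (g : ℝ → ℝ → ℝ) (Lg : ℝ) (hLg : 0 < Lg)
    (hLip : ∀ t a b : ℝ, |g t a - g t b| ≤ Lg * |a - b|)
    (N : ℕ) (τ : ℕ → ℝ)
    (hτ : ∀ k, 1 ≤ k → k ≤ N → 0 < τ k)
    (hstep : ∀ k, 1 ≤ k → k ≤ N → τ k ≤ 1 / (4 * Lg))
    (y ybar ε : ℕ → ℝ)
    (hy : ∀ n, 1 ≤ n → n ≤ N → D2 τ y n = g (tlv τ n) (y n))
    (hybar : ∀ n, 1 ≤ n → n ≤ N → D2 τ ybar n = g (tlv τ n) (ybar n) + ε n) :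
    ∀ n (hn : 1 ≤ n), n ≤ N →
      |y n - ybar n| ≤ 2 * Real.exp (4 * Lg * tlv τ (n - 1)) *
        (|y 0 - ybar 0| + 2 * tlv τ n *
          (Finset.Icc 1 n).sup' (Finset.nonempty_Icc.mpr hn) (fun j => |ε j|)) := by
  intro n hn hnN
  set εmax := (Finset.Icc 1 n).sup' (Finset.nonempty_Icc.mpr hn) (fun j => |ε j|)
  have hε : ∀ j, 1 ≤ j → j ≤ n → |ε j| ≤ εmax := fun j hj hjn =>
    Finset.le_sup' (fun j => |ε j|) (Finset.mem_Icc.mpr ⟨hj, hjn⟩)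
  have hεmax : 0 ≤ εmax := (abs_nonneg _).trans (hε n hn le_rfl)
  have hτn : ∀ k, 1 ≤ k → k ≤ n → 0 < τ k := fun k hk hkn => hτ k hk (hkn.trans hnN)
  have hLτ : ∀ k, 1 ≤ k → k ≤ n → Lg * τ k ≤ 1 / 4 := fun k hk hkn => by
    have := (le_div_iff₀ (by positivity)).mp (hstep k hk (hkn.trans hnN))
    linarith
  have hgronwall := le_exp_mul_tlv_of_implicit_step hLg.le hεmax (abs_nonneg _)
    (fun k hk hkn => (hτn k hk hkn).le) (fun k hk hkn => (hLτ k hk hkn).trans (by norm_num))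
    (fun j hj hjn _ hM => abs_sub_le_add_of_D2_eq hLg.le hLip hj (fun k hk hkj => hτn k hk (by omega))
      (fun i hi hij => hy i hi (by omega)) (fun i hi hij => hybar i hi (by omega))
      (fun i hi hij => hε i hi (by omega)) hM)
    n le_rfl n le_rfl
  have htn : 0 ≤ tlv τ n := tlv_nonneg fun k hk hkn => (hτn k hk hkn).le
  calc |y n - ybar n|
      ≤ Real.exp (2 * Lg * tlv τ n) * (|y 0 - ybar 0| + εmax * tlv τ n) := hgronwall
    _ ≤ 2 * Real.exp (4 * Lg * tlv τ (n - 1)) * (|y 0 - ybar 0| + 2 * tlv τ n * εmax) := by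
      gcongr ?_ * ?_
      · exact exp_two_mul_tlv_le hn hLg.le (fun k hk hkn => (hτn k hk hkn).le) (hLτ n hn le_rfl)
      · nlinarith

/-- zero-stability of the adaptive BDF2 method for Lipschitz ODEs. -/
theorem bdf2_zero_stability
    (g : ℝ → ℝ → ℝ) (Lg : ℝ) (hLg : 0 < Lg)
    (hLip : ∀ t a b : ℝ, |g t a - g t b| ≤ Lg * |a - b|)
    (N : ℕ) (τ : ℕ → ℝ)
    (hτ : ∀ k, 1 ≤ k → k ≤ N → 0 < τ k)
    (hstep : ∀ k, 1 ≤ k → k ≤ N → τ k ≤ 1 / (4 * Lg))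
    (hS1 : ∀ k, 2 ≤ k → k ≤ N →
      0 < τ k / τ (k - 1) ∧ τ k / τ (k - 1) ≤ (3 + Real.sqrt 17) / 2)
    (y ybar ε : ℕ → ℝ)
    (hy : ∀ n, 1 ≤ n → n ≤ N → D2 τ y n = g (tlv τ n) (y n))
    (hybar : ∀ n, 1 ≤ n → n ≤ N → D2 τ ybar n = g (tlv τ n) (ybar n) + ε n) :
    ∀ n (hn : 1 ≤ n), n ≤ N →
      |y n - ybar n| ≤ 2 * Real.exp (4 * Lg * tlv τ (n - 1)) *
        (|y 0 - ybar 0| + 2 * tlv τ n *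
          (Finset.Icc 1 n).sup' (Finset.nonempty_Icc.mpr hn) (fun j => |ε j|)) :=
  bdf2_zero_stability_general g Lg hLg hLip N τ hτ hstep y ybar ε hy hybar
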